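/- Let μ(X) = ∑_{n≥2} n² e^{-π(n²-1)X} for X > 0. Then for a ≥ 20/(4 - π) and any real Y with nonzero denominator, |π·(∑_{n ∈ ℤ}(n-Y)⁵ e^{-aπ(n-Y)²})/(∑_{n ∈ ℤ}(n-Y) e^{-aπ(n-Y)²}) - (5/a)·(∑_{n ∈ ℤ}(n-Y)³ e^{-aπ(n-Y)²})/(∑_{n ∈ ℤ}(n-Y) e^{-aπ(n-Y)²})| ≤ π/16 + 5/(4a) ≤ 1/4. -/

import Mathlib

noncomputable def muSum (X : ℝ) : ℝ :=
  ∑' n : ℕ, ((n : ℝ) + 2)^2 * Real.exp (-Real.pi * (((n : ℝ) + 2)^2 - 1) * X)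



open Real

/-- Monotonicity of the Gaussian factor. -/
lemma qq_E_mono {A p q : ℝ} (hA : 0 ≤ A) (hp : 0 ≤ p) (hpq : p ≤ q) :
    Real.exp (-(A * q^2)) ≤ Real.exp (-(A * p^2)) := by
  apply Real.exp_le_exp.2
  have : p^2 ≤ q^2 := by nlinarith
  nlinarith

/-- Difference of Gaussians bound. -/
lemma qq_E_diff {A p q : ℝ} (hA : 0 ≤ A) (hp : 0 ≤ p) (hpq : p ≤ q) :
    Real.exp (-(A * p^2)) - Real.exp (-(A * q^2)) ≤ Real.exp (-(A * p^2)) * (A * (q^2 - p^2)) := by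
  have h1 : Real.exp (-(A * q^2)) = Real.exp (-(A * p^2)) * Real.exp (-(A * (q^2 - p^2))) := by
    rw [← Real.exp_add]; ring_nf
  have h2 : 1 - A * (q^2 - p^2) ≤ Real.exp (-(A * (q^2 - p^2))) := by
    have := Real.add_one_le_exp (-(A * (q^2 - p^2))); linarith
  have h3 : 0 < Real.exp (-(A * p^2)) := Real.exp_pos _
  calc Real.exp (-(A * p^2)) - Real.exp (-(A * q^2))
      = Real.exp (-(A * p^2)) * (1 - Real.exp (-(A * (q^2 - p^2)))) := by rw [h1]; ring
    _ ≤ Real.exp (-(A * p^2)) * (A * (q^2 - p^2)) := by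
        apply mul_le_mul_of_nonneg_left _ h3.le
        linarith

/-- Geometric-domination bound for a series. -/
lemma qq_geo {u : ℕ → ℝ} {B : ℝ} (h : ∀ k, |u k| ≤ B * (1/2)^k) :
    Summable u ∧ |∑' k, u k| ≤ 2 * B := by
  have hB : 0 ≤ B := by have := h 0; have := abs_nonneg (u 0); simp at this ⊢; nlinarith [h 0, abs_nonneg (u 0)]
  have hgeo : Summable (fun k : ℕ => B * (1/2)^k) :=
    (summable_geometric_of_lt_one (by norm_num) (by norm_num)).mul_left B
  have habs : Summable (fun k => |u k|) :=
    Summable.of_nonneg_of_le (fun k => abs_nonneg _) h hgeo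
  have hsum : Summable u := habs.of_abs
  refine ⟨hsum, ?_⟩
  have h1 : |∑' k, u k| ≤ ∑' k, |u k| := by
    have h' : Summable fun n => ‖u n‖ := by simpa [Real.norm_eq_abs] using habs
    have := norm_tsum_le_tsum_norm h'
    simpa [Real.norm_eq_abs] using this
  have h2 : ∑' k, |u k| ≤ ∑' k, B * (1/2)^k := Summable.tsum_le_tsum h habs hgeo
  have h3 : ∑' k : ℕ, B * (1/2)^k = B * 2 := by
    rw [tsum_mul_left, tsum_geometric_of_lt_one (by norm_num) (by norm_num)]
    norm_num
  linarith

/-- Smallness: A e^{-A/2} is tiny for A ≥ 72. -/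
lemma qq_small {A : ℝ} (hA : 72 ≤ A) : A * Real.exp (-(A/2)) ≤ 1/100000000 := by
  have h36 : (2.5:ℝ)^(36:ℕ) ≤ Real.exp 36 := by
    have h1 : (2.5:ℝ) ≤ Real.exp 1 := by
      have := Real.exp_one_gt_d9; linarith
    calc (2.5:ℝ)^(36:ℕ) ≤ (Real.exp 1)^(36:ℕ) := by
          apply pow_le_pow_left₀ (by norm_num) h1
      _ = Real.exp ((36:ℕ) * 1) := (Real.exp_nat_mul 1 36).symm
      _ = Real.exp 36 := by norm_num
  have hnum : (200000000000000:ℝ) ≤ (2.5:ℝ)^(36:ℕ) := by norm_num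
  have hE : Real.exp (A/2) = Real.exp 36 * Real.exp ((A - 72)/2) := by
    rw [← Real.exp_add]; ring_nf
  have h2 : (A - 70)/2 ≤ Real.exp ((A - 72)/2) := by
    have := Real.add_one_le_exp ((A - 72)/2); linarith
  have hEc : (200000000000000:ℝ) * ((A - 70)/2) ≤ Real.exp (A/2) := by
    rw [hE]
    have hpos : (0:ℝ) ≤ (A-70)/2 := by linarith
    calc (200000000000000:ℝ) * ((A - 70)/2) ≤ Real.exp 36 * ((A-70)/2) := by
          apply mul_le_mul_of_nonneg_right _ hpos; linarith
      _ ≤ Real.exp 36 * Real.exp ((A-72)/2) := by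
          apply mul_le_mul_of_nonneg_left h2 (Real.exp_pos 36).le
  -- goal: A * exp(-(A/2)) ≤ 1e-8  ⟺  A ≤ 1e-8 * exp(A/2)
  have hEpos : 0 < Real.exp (A/2) := Real.exp_pos _
  rw [Real.exp_neg]
  rw [mul_inv_le_iff₀ hEpos]
  calc A ≤ (1/100000000) * ((200000000000000:ℝ) * ((A - 70)/2)) := by nlinarith
    _ ≤ (1/100000000) * Real.exp (A/2) := by
        apply mul_le_mul_of_nonneg_left hEc (by norm_num)

/-- g_j(t) = t^j e^{-At²} is decreasing on [1/4, ∞) for A ≥ 72, j ≤ 5. -/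
lemma qq_gdec {A : ℝ} (hA : 72 ≤ A) {j : ℕ} (hj1 : 1 ≤ j) (hj5 : j ≤ 5)
    {u v : ℝ} (hu : 1/4 ≤ u) (huv : u ≤ v) :
    v^j * Real.exp (-(A * v^2)) ≤ u^j * Real.exp (-(A * u^2)) := by
  have hu0 : 0 < u := by linarith
  have hv0 : 0 < v := by linarith
  obtain ⟨x, hx⟩ : ∃ x, x = A * (v^2 - u^2) := ⟨_, rfl⟩
  have hx0 : 0 ≤ x := by
    rw [hx]
    have : u^2 ≤ v^2 := by nlinarith
    apply mul_nonneg (by linarith) (by linarith)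
  have hj0 : 0 < (j:ℝ) := by exact_mod_cast hj1
  have hj5' : (j:ℝ) ≤ 5 := by exact_mod_cast hj5
  have h1 : v ≤ u * (1 + x / j) := by
    rw [div_eq_mul_inv, ← mul_le_mul_iff_of_pos_right hj0]
    have : u * (1 + x * (j:ℝ)⁻¹) * j = u * j + u * x := by field_simp
    rw [this]
    have key : (v - u) * (j:ℝ) ≤ u * x := by
      have h8 : 1/8 ≤ u * (v + u) := by nlinarith
      have h9 : 9 ≤ u * A * (v + u) := by nlinarith
      have : (v - u) * (j:ℝ) ≤ (v - u) * 9 := by nlinarith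
      calc (v-u) * (j:ℝ) ≤ (v-u) * 9 := this
        _ ≤ (v-u) * (u * A * (v+u)) := by nlinarith
        _ = u * x := by rw [hx]; ring
    nlinarith
  have h2 : 1 + x / j ≤ Real.exp (x / j) := by
    have := Real.add_one_le_exp (x / j); linarith
  have h3 : v ≤ u * Real.exp (x / j) := by
    calc v ≤ u * (1 + x / j) := h1
      _ ≤ u * Real.exp (x / j) := by apply mul_le_mul_of_nonneg_left h2 hu0.le
  have h4 : v^j ≤ u^j * Real.exp x := by
    calc v^j ≤ (u * Real.exp (x / j))^j := by
          apply pow_le_pow_left₀ hv0.le h3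
      _ = u^j * (Real.exp (x/j))^j := mul_pow _ _ _
      _ = u^j * Real.exp x := by
          rw [← Real.exp_nat_mul]
          congr 1
          field_simp
  calc v^j * Real.exp (-(A * v^2)) ≤ (u^j * Real.exp x) * Real.exp (-(A * v^2)) := by
        apply mul_le_mul_of_nonneg_right h4 (Real.exp_pos _).le
    _ = u^j * Real.exp (-(A * u^2)) := by
        rw [mul_assoc, ← Real.exp_add]
        congr 2
        rw [hx]; ring

/-- (k:ℝ)+1 ≤ 2^k -/
lemma qq_pow2 (k : ℕ) : (k:ℝ) + 1 ≤ 2^k := by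
  have := Nat.lt_two_pow_self (n := k)
  have : (k:ℝ) + 1 ≤ ((2^k : ℕ) : ℝ) := by exact_mod_cast this
  simpa [Nat.cast_pow] using this

/-- Per-term geometric bound for the basic one-sided series. -/
lemma qq_comp_bound {A : ℝ} (hA : 72 ≤ A) {j : ℕ} (hj5 : j ≤ 5) {c : ℝ}
    (hc0 : 0 ≤ c) (hc2 : c ≤ 2) (k : ℕ) :
    |((k:ℝ)+c)^j * Real.exp (-(A * ((k:ℝ)+c)^2))| ≤ 32 * (1/2)^k := by
  have hk0 : (0:ℝ) ≤ (k:ℝ) := Nat.cast_nonneg k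
  have ht0 : (0:ℝ) ≤ (k:ℝ) + c := by linarith
  have hE : (0:ℝ) < Real.exp (-(A * ((k:ℝ)+c)^2)) := Real.exp_pos _
  rw [abs_of_nonneg (by positivity)]
  have h1 : ((k:ℝ)+c)^j ≤ ((k:ℝ)+2)^5 := by
    calc ((k:ℝ)+c)^j ≤ ((k:ℝ)+2)^j := by
          apply pow_le_pow_left₀ ht0; linarith
      _ ≤ ((k:ℝ)+2)^5 := by
          apply pow_le_pow_right₀ (by linarith) hj5
  have h2 : Real.exp (-(A * ((k:ℝ)+c)^2)) ≤ Real.exp (-A)^k := by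
    rw [← Real.exp_nat_mul]
    apply Real.exp_le_exp.2
    have hkk : k ≤ k^2 := Nat.le_self_pow (by norm_num) k
    have hkk' : (k:ℝ) ≤ (k:ℝ)^2 := by exact_mod_cast hkk
    have : (k:ℝ) ≤ ((k:ℝ)+c)^2 := by nlinarith
    nlinarith
  have h3 : ((k:ℝ)+2)^5 ≤ 32 * 32^k := by
    have hp : (k:ℝ) + 2 ≤ 2 * 2^k := by
      have := qq_pow2 k; nlinarith [pow_pos (show (0:ℝ) < 2 by norm_num) k]
    calc ((k:ℝ)+2)^5 ≤ (2 * 2^k)^5 := by apply pow_le_pow_left₀ (by linarith) hp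
      _ = 32 * (2^k)^5 := by ring
      _ = 32 * 32^k := by rw [← pow_mul, show (32:ℝ) = 2^5 by norm_num, ← pow_mul]; ring_nf
  have h4 : (0:ℝ) ≤ 32^k * Real.exp (-A)^k := by positivity
  have h5 : 32^k * Real.exp (-A)^k ≤ (1/2:ℝ)^k := by
    rw [← mul_pow]
    apply pow_le_pow_left₀ (by positivity)
    have : Real.exp (-A) ≤ Real.exp (-72) := Real.exp_le_exp.2 (by linarith)
    have h72 : Real.exp (-72) ≤ 1/64 := by
      rw [Real.exp_neg]
      rw [inv_le_comm₀ (Real.exp_pos _) (by norm_num)]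
      have := Real.add_one_le_exp (72:ℝ); linarith
    nlinarith [Real.exp_pos (-A)]
  calc ((k:ℝ)+c)^j * Real.exp (-(A * ((k:ℝ)+c)^2))
      ≤ ((k:ℝ)+2)^5 * Real.exp (-A)^k := by
        apply mul_le_mul h1 h2 hE.le (by positivity)
    _ ≤ (32 * 32^k) * Real.exp (-A)^k := by
        apply mul_le_mul_of_nonneg_right h3 (by positivity)
    _ = 32 * (32^k * Real.exp (-A)^k) := by ring
    _ ≤ 32 * (1/2)^k := by nlinarith

/-- Summability of one-sided Gaussian series. -/
lemma qq_comp_summable {A : ℝ} (hA : 72 ≤ A) {j : ℕ} (hj5 : j ≤ 5) {c : ℝ}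
    (hc0 : 0 ≤ c) (hc2 : c ≤ 2) :
    Summable (fun k : ℕ => ((k:ℝ)+c)^j * Real.exp (-(A * ((k:ℝ)+c)^2))) :=
  (qq_geo (fun k => qq_comp_bound hA hj5 hc0 hc2 k)).1
/-- Power difference bound. -/
lemma qq_powdiff {p q : ℝ} (hp : 0 ≤ p) (hpq : p ≤ q) {j : ℕ} (hj1 : 1 ≤ j) (hj5 : j ≤ 5) :
    q^j - p^j ≤ (j:ℝ) * q^(j-1) * (q - p) := by
  have hq0 : (0:ℝ) ≤ q := le_trans hp hpq
  have hd0 : (0:ℝ) ≤ q - p := sub_nonneg.2 hpq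
  have h2 : p^2 ≤ q^2 := pow_le_pow_left₀ hp hpq 2
  have h3 : p^3 ≤ q^3 := pow_le_pow_left₀ hp hpq 3
  have h4 : p^4 ≤ q^4 := pow_le_pow_left₀ hp hpq 4
  have h5a : 0 ≤ (q-p)*(q^3*(q-p)) := mul_nonneg hd0 (mul_nonneg (by positivity) hd0)
  have h5b : 0 ≤ (q-p)*(q^2*(q^2-p^2)) := mul_nonneg hd0 (mul_nonneg (by positivity) (by linarith))
  have h5c : 0 ≤ (q-p)*(q*(q^3-p^3)) := mul_nonneg hd0 (mul_nonneg hq0 (by linarith))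
  have h5d : 0 ≤ (q-p)*(q^4-p^4) := mul_nonneg hd0 (by linarith)
  have h5e : 0 ≤ (q-p)*(q*(q-p)) := mul_nonneg hd0 (mul_nonneg hq0 hd0)
  have h5f : 0 ≤ (q-p)*(q^2-p^2) := mul_nonneg hd0 (by linarith)
  have h5g : 0 ≤ (q-p)*(q^2*(q-p)) := mul_nonneg hd0 (mul_nonneg (by positivity) hd0)
  have h5h : 0 ≤ (q-p)*(q^3-p^3) := mul_nonneg hd0 (by linarith)
  interval_cases j <;> push_cast <;> nlinarith [h5a, h5b, h5c, h5d, h5e, h5f, h5g, h5h, hd0]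

/-- Master per-term bound for differences of Gaussian terms. -/
lemma qq_term {A p q : ℝ} (hA : 72 ≤ A) {j : ℕ} (hj1 : 1 ≤ j) (hj5 : j ≤ 5)
    (hp0 : 0 ≤ p) (hpq : p ≤ q) (hq1 : 1 ≤ q) :
    |p^j * Real.exp (-(A * p^2)) - q^j * Real.exp (-(A * q^2))|
      ≤ Real.exp (-(A * p^2)) * (p^j * (A * (q^2 - p^2)) + 5 * q^4 * (q - p)) := by
  have hA0 : (0:ℝ) ≤ A := by linarith
  have hq0 : (0:ℝ) ≤ q := le_trans hp0 hpq
  have hd0 : (0:ℝ) ≤ q - p := sub_nonneg.2 hpq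
  have hEq_le : Real.exp (-(A * q^2)) ≤ Real.exp (-(A * p^2)) := qq_E_mono hA0 hp0 hpq
  have hEd0 : 0 ≤ Real.exp (-(A * p^2)) - Real.exp (-(A * q^2)) := by linarith
  have hEd : Real.exp (-(A * p^2)) - Real.exp (-(A * q^2))
      ≤ Real.exp (-(A * p^2)) * (A * (q^2 - p^2)) := qq_E_diff hA0 hp0 hpq
  have hpd0 : 0 ≤ q^j - p^j := by
    have := pow_le_pow_left₀ hp0 hpq j; linarith
  have hpd : q^j - p^j ≤ (j:ℝ) * q^(j-1) * (q - p) := qq_powdiff hp0 hpq hj1 hj5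
  have hq4 : (j:ℝ) * q^(j-1) ≤ 5 * q^4 := by
    have h1 : q^(j-1) ≤ q^4 := by
      apply pow_le_pow_right₀ hq1; omega
    have hj5' : (j:ℝ) ≤ 5 := by exact_mod_cast hj5
    have hj0' : (0:ℝ) ≤ (j:ℝ) := by positivity
    have hq0' : (0:ℝ) ≤ q^(j-1) := by positivity
    nlinarith [pow_nonneg hq0 4]
  have b1 : q^j - p^j ≤ (5*q^4) * (q-p) := by
    calc q^j - p^j ≤ ((j:ℝ) * q^(j-1)) * (q - p) := hpd
      _ ≤ (5*q^4) * (q-p) := mul_le_mul_of_nonneg_right hq4 hd0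
  have b2 : (q^j - p^j) * Real.exp (-(A * q^2)) ≤ ((5*q^4)*(q-p)) * Real.exp (-(A * p^2)) :=
    mul_le_mul b1 hEq_le (Real.exp_pos _).le (mul_nonneg (by positivity) hd0)
  have hqp2 : 0 ≤ A * (q^2 - p^2) := mul_nonneg hA0 (by nlinarith [pow_le_pow_left₀ hp0 hpq 2])
  have hpj0 : (0:ℝ) ≤ p^j := by positivity
  have hEp0 : (0:ℝ) < Real.exp (-(A * p^2)) := Real.exp_pos _
  have hEq0 : (0:ℝ) < Real.exp (-(A * q^2)) := Real.exp_pos _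
  have hid : p^j * Real.exp (-(A * p^2)) - q^j * Real.exp (-(A * q^2))
      = p^j * (Real.exp (-(A * p^2)) - Real.exp (-(A * q^2)))
        - (q^j - p^j) * Real.exp (-(A * q^2)) := by ring
  have t1 : p^j * (Real.exp (-(A * p^2)) - Real.exp (-(A * q^2)))
      ≤ p^j * (Real.exp (-(A * p^2)) * (A * (q^2 - p^2))) := mul_le_mul_of_nonneg_left hEd hpj0
  have t2 : 0 ≤ p^j * (Real.exp (-(A * p^2)) - Real.exp (-(A * q^2))) := mul_nonneg hpj0 hEd0
  have t3 : 0 ≤ (q^j - p^j) * Real.exp (-(A * q^2)) := mul_nonneg hpd0 hEq0.le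
  rw [hid, abs_le]
  constructor
  · nlinarith [b2, t2, mul_nonneg hEp0.le (mul_nonneg hpj0 hqp2)]
  · nlinarith [t1, t3, mul_nonneg hEp0.le (mul_nonneg (mul_nonneg (by norm_num : (0:ℝ) ≤ 5) (pow_nonneg hq0 4)) hd0)]
set_option maxHeartbeats 1000000 in
/-- Generic geometric per-term bound used for tail sums. -/
lemma qq_termG {A : ℝ} (hA : 72 ≤ A) {j : ℕ} (hj1 : 1 ≤ j) (hj5 : j ≤ 5)
    {p q c0 : ℝ} (k : ℕ) (hp0 : 0 ≤ p) (hpq : p ≤ q) (hq1 : 1 ≤ q)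
    (hqk : q ≤ (k:ℝ)+2) (hc0 : 0 ≤ c0) (hpc : c0 + 2*k ≤ p^2) :
    |p^j * Real.exp (-(A * p^2)) - q^j * Real.exp (-(A * q^2))|
      ≤ (192 * A * (q - p) * Real.exp (-(A * c0))) * (1/2)^k := by
  have hA0 : (0:ℝ) ≤ A := by linarith
  have hd0 : (0:ℝ) ≤ q - p := sub_nonneg.2 hpq
  have hk0 : (0:ℝ) ≤ (k:ℝ) := Nat.cast_nonneg k
  have hk2 : (1:ℝ) ≤ (k:ℝ)+2 := by linarith
  have main := qq_term hA hj1 hj5 hp0 hpq hq1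
  -- bound the Gaussian
  have hE : Real.exp (-(A * p^2)) ≤ Real.exp (-(A * c0)) * Real.exp (-(2*A))^k := by
    rw [← Real.exp_nat_mul, ← Real.exp_add]
    apply Real.exp_le_exp.2
    have : A * (c0 + 2*k) ≤ A * p^2 := mul_le_mul_of_nonneg_left hpc hA0
    nlinarith
  -- bound the polynomial part
  have hpk : p ≤ (k:ℝ)+2 := le_trans hpq hqk
  have hpow5 : p^j ≤ ((k:ℝ)+2)^5 := by
    calc p^j ≤ ((k:ℝ)+2)^j := pow_le_pow_left₀ hp0 hpk j
      _ ≤ ((k:ℝ)+2)^5 := pow_le_pow_right₀ hk2 hj5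
  have hq4 : q^4 ≤ ((k:ℝ)+2)^4 := pow_le_pow_left₀ (by linarith) hqk 4
  have hqp : q^2 - p^2 ≤ 2*((k:ℝ)+2)*(q-p) := by
    nlinarith [mul_le_mul_of_nonneg_right (show q+p ≤ 2*((k:ℝ)+2) by linarith) hd0]
  have hq20 : 0 ≤ A * (q^2 - p^2) := mul_nonneg hA0 (by nlinarith [pow_le_pow_left₀ hp0 hpq 2])
  have hinner : p^j * (A * (q^2 - p^2)) + 5 * q^4 * (q - p)
      ≤ 3*A*(q-p)*((k:ℝ)+2)^6 := by
    have i1 : A * (q^2 - p^2) ≤ A * (2*((k:ℝ)+2)*(q-p)) := mul_le_mul_of_nonneg_left hqp hA0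
    have i2 : p^j * (A * (q^2 - p^2)) ≤ ((k:ℝ)+2)^5 * (A * (2*((k:ℝ)+2)*(q-p))) :=
      mul_le_mul hpow5 i1 hq20 (by positivity)
    have i3 : 5 * q^4 * (q-p) ≤ 5 * ((k:ℝ)+2)^4 * (q-p) := by
      apply mul_le_mul_of_nonneg_right _ hd0
      nlinarith
    have i4 : ((k:ℝ)+2)^5 * (A * (2*((k:ℝ)+2)*(q-p))) = 2*A*(q-p)*((k:ℝ)+2)^6 := by ring
    have w0 : ((k:ℝ)+2)^4 ≤ ((k:ℝ)+2)^6 := pow_le_pow_right₀ hk2 (by norm_num)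
    have w1 : 5*((k:ℝ)+2)^4 ≤ A*((k:ℝ)+2)^6 := by
      nlinarith [w0, mul_nonneg (show (0:ℝ) ≤ A - 5 by linarith) (pow_nonneg (show (0:ℝ) ≤ (k:ℝ)+2 by linarith) 6)]
    have i5 : 5*((k:ℝ)+2)^4*(q-p) ≤ (A*((k:ℝ)+2)^6)*(q-p) := mul_le_mul_of_nonneg_right w1 hd0
    linarith [i2, i3, i5, i4]
  have hinner0 : 0 ≤ p^j * (A * (q^2 - p^2)) + 5 * q^4 * (q - p) := by
    have n1 : 0 ≤ p^j * (A * (q^2-p^2)) := mul_nonneg (by positivity) hq20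
    have n2 : 0 ≤ 5 * q^4 * (q - p) :=
      mul_nonneg (mul_nonneg (by norm_num) (pow_nonneg (by linarith) 4)) hd0
    linarith
  have step : |p^j * Real.exp (-(A * p^2)) - q^j * Real.exp (-(A * q^2))|
      ≤ (Real.exp (-(A * c0)) * Real.exp (-(2*A))^k) * (3*A*(q-p)*((k:ℝ)+2)^6) := by
    calc |p^j * Real.exp (-(A * p^2)) - q^j * Real.exp (-(A * q^2))|
        ≤ Real.exp (-(A * p^2)) * (p^j * (A * (q^2 - p^2)) + 5 * q^4 * (q - p)) := main
      _ ≤ (Real.exp (-(A * c0)) * Real.exp (-(2*A))^k) * (3*A*(q-p)*((k:ℝ)+2)^6) := by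
          apply mul_le_mul hE hinner hinner0 (by positivity)
  have hk64 : ((k:ℝ)+2)^6 ≤ 64 * 64^k := by
    have h1 : (k:ℝ)+2 ≤ 2 * 2^k := by
      have := qq_pow2 (k+1)
      push_cast at this
      have h2 : (2:ℝ)^(k+1) = 2 * 2^k := by ring
      linarith [this, h2.le]
    calc ((k:ℝ)+2)^6 ≤ (2*2^k)^6 := pow_le_pow_left₀ (by linarith) h1 6
      _ = 64 * (2^k)^6 := by ring
      _ = 64 * 64^k := by
          rw [← pow_mul, show (64:ℝ) = 2^6 by norm_num, ← pow_mul]; ring_nf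
  have h64 : (0:ℝ) ≤ 64 * Real.exp (-(2*A)) ∧ 64 * Real.exp (-(2*A)) ≤ 1/2 := by
    constructor
    · positivity
    · have : Real.exp (-(2*A)) ≤ Real.exp (-144) := Real.exp_le_exp.2 (by linarith)
      have h144 : Real.exp (-144:ℝ) ≤ 1/128 := by
        rw [Real.exp_neg, inv_le_comm₀ (Real.exp_pos _) (by norm_num)]
        have := Real.add_one_le_exp (144:ℝ); linarith
      linarith
  have final : (Real.exp (-(A * c0)) * Real.exp (-(2*A))^k) * (3*A*(q-p)*((k:ℝ)+2)^6)
      ≤ (192 * A * (q - p) * Real.exp (-(A * c0))) * (1/2)^k := by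
    have e1 : Real.exp (-(2*A))^k * ((k:ℝ)+2)^6 ≤ Real.exp (-(2*A))^k * (64 * 64^k) :=
      mul_le_mul_of_nonneg_left hk64 (by positivity)
    have e2 : (64:ℝ)^k * Real.exp (-(2*A))^k ≤ (1/2)^k := by
      rw [← mul_pow]
      exact pow_le_pow_left₀ (by positivity) h64.2 k
    have e3 : Real.exp (-(2*A))^k * (64 * 64^k) = 64 * (64^k * Real.exp (-(2*A))^k) := by ring
    have e4 : Real.exp (-(2*A))^k * ((k:ℝ)+2)^6 ≤ 64 * (1/2)^k := by
      rw [e3] at e1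
      have : (64:ℝ) * (64^k * Real.exp (-(2*A))^k) ≤ 64 * (1/2)^k := by
        apply mul_le_mul_of_nonneg_left e2 (by norm_num)
      linarith
    have hcoef : 0 ≤ 3*A*(q-p) := by positivity
    calc (Real.exp (-(A * c0)) * Real.exp (-(2*A))^k) * (3*A*(q-p)*((k:ℝ)+2)^6)
        = (3*A*(q-p)*Real.exp (-(A * c0))) * (Real.exp (-(2*A))^k * ((k:ℝ)+2)^6) := by ring
      _ ≤ (3*A*(q-p)*Real.exp (-(A * c0))) * (64 * (1/2)^k) := by
          apply mul_le_mul_of_nonneg_left e4 (by positivity)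
      _ = (192 * A * (q - p) * Real.exp (-(A * c0))) * (1/2)^k := by ring
  exact le_trans step final
noncomputable def qqP (A c : ℝ) (j : ℕ) : ℝ :=
  ∑' k : ℕ, ((k:ℝ)+c)^j * Real.exp (-(A * ((k:ℝ)+c)^2))

lemma qqP_shift {A : ℝ} (hA : 72 ≤ A) {j : ℕ} (hj5 : j ≤ 5) {c : ℝ}
    (hc0 : 0 ≤ c) (hc1 : c ≤ 1) :
    qqP A c j = c^j * Real.exp (-(A * c^2)) + qqP A (c+1) j := by
  rw [qqP, Summable.tsum_eq_zero_add (qq_comp_summable hA hj5 hc0 (by linarith))]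
  congr 1
  · norm_num
  · rw [qqP]
    apply tsum_congr
    intro k
    have h1 : ((k+1:ℕ):ℝ) + c = (k:ℝ) + (c+1) := by push_cast; ring
    rw [h1]

lemma qq_nat_summable {A : ℝ} (hA : 72 ≤ A) {j : ℕ} (hj5 : j ≤ 5) {y : ℝ}
    (hy0 : 0 < y) (hy1 : y ≤ 1/2) :
    Summable (fun n : ℕ => ((n:ℝ)-y)^j * Real.exp (-(A * ((n:ℝ)-y)^2))) := by
  rw [← summable_nat_add_iff 1]
  have := qq_comp_summable hA hj5 (show (0:ℝ) ≤ 1-y by linarith) (show (1:ℝ)-y ≤ 2 by linarith)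
  apply this.congr
  intro k
  have h1 : (k:ℝ) + (1-y) = ((k+1:ℕ):ℝ) - y := by push_cast; ring
  rw [h1]

lemma qq_split {A : ℝ} (hA : 72 ≤ A) {j : ℕ} (hj1 : 1 ≤ j) (hj5 : j ≤ 5) (hjodd : Odd j)
    {y : ℝ} (hy0 : 0 < y) (hy1 : y ≤ 1/2) :
    ∑' n : ℤ, ((n:ℝ)-y)^j * Real.exp (-(A * ((n:ℝ)-y)^2))
      = qqP A (1-y) j - qqP A y j := by
  set f : ℤ → ℝ := fun n => ((n:ℝ)-y)^j * Real.exp (-(A * ((n:ℝ)-y)^2)) with hf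
  have hs1 : Summable (fun n : ℕ => f n) := by
    have := qq_nat_summable hA hj5 hy0 hy1
    apply this.congr
    intro k
    simp only [hf, Int.cast_natCast]
  have hneg : (fun n : ℕ => f (-(n+1)))
      = fun n : ℕ => -(((n:ℝ)+(1+y))^j * Real.exp (-(A * ((n:ℝ)+(1+y))^2))) := by
    funext n
    simp only [hf]
    push_cast
    rw [show (-((n:ℝ) + 1) - y) = -((n:ℝ)+(1+y)) by ring]
    rw [Odd.neg_pow hjodd, neg_sq]
    ring
  have hs2 : Summable (fun n : ℕ => f (-(n+1))) := by
    rw [hneg]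
    exact (qq_comp_summable hA hj5 (show (0:ℝ) ≤ 1+y by linarith) (by linarith)).neg
  have hsplit := tsum_of_nat_of_neg_add_one hs1 hs2
  have e1 : ∑' n : ℕ, f n = -(y^j * Real.exp (-(A * y^2))) + qqP A (1-y) j := by
    rw [Summable.tsum_eq_zero_add hs1]
    congr 1
    · simp only [hf]
      push_cast
      rw [show (0:ℝ) - y = -y by ring]
      rw [Odd.neg_pow hjodd, neg_sq]
      ring
    · rw [qqP]
      apply tsum_congr
      intro k
      simp only [hf]
      push_cast
      rw [show ((k:ℝ) + 1) - y = (k:ℝ) + (1-y) by ring]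
  have e2 : ∑' n : ℕ, f (-(n+1)) = -(qqP A (1+y) j) := by
    rw [hneg, tsum_neg, qqP]
  have e3 : qqP A y j = y^j * Real.exp (-(A * y^2)) + qqP A (1+y) j := by
    rw [qqP_shift hA hj5 hy0.le (by linarith)]
    congr 2
    rw [add_comm]
  rw [hsplit, e1, e2, e3]
  ring
set_option maxHeartbeats 1000000 in
/-- Regime A (0 < y ≤ 1/4): the sum is close to its dominant term. -/
lemma qq_coreA {A y : ℝ} (hA : 72 ≤ A) (hy0 : 0 < y) (hy4 : y ≤ 1/4)
    {j : ℕ} (hj1 : 1 ≤ j) (hj5 : j ≤ 5) (hjodd : Odd j) :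
    |(∑' n : ℤ, ((n:ℝ)-y)^j * Real.exp (-(A * ((n:ℝ)-y)^2))) + y^j * Real.exp (-(A * y^2))|
      ≤ (1/100) * (y * Real.exp (-(A * y^2))) := by
  have hy2 : y ≤ 1/2 := by linarith
  have s1y := qq_comp_summable hA hj5 (show (0:ℝ) ≤ 1-y by linarith) (show (1:ℝ)-y ≤ 2 by linarith)
  have s1py := qq_comp_summable hA hj5 (show (0:ℝ) ≤ 1+y by linarith) (show (1:ℝ)+y ≤ 2 by linarith)
  have hsplit := qq_split hA hj1 hj5 hjodd hy0 hy2
  have hshift : qqP A y j = y^j * Real.exp (-(A * y^2)) + qqP A (1+y) j := by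
    rw [qqP_shift hA hj5 hy0.le (by linarith)]
    congr 2
    rw [add_comm]
  have hrep : (∑' n : ℤ, ((n:ℝ)-y)^j * Real.exp (-(A * ((n:ℝ)-y)^2))) + y^j * Real.exp (-(A * y^2))
      = ∑' k : ℕ, (((k:ℝ)+(1-y))^j * Real.exp (-(A * ((k:ℝ)+(1-y))^2))
          - ((k:ℝ)+(1+y))^j * Real.exp (-(A * ((k:ℝ)+(1+y))^2))) := by
    rw [hsplit, hshift, Summable.tsum_sub s1y s1py, qqP, qqP]
    ring
  rw [hrep]
  have hterm : ∀ k : ℕ, |((k:ℝ)+(1-y))^j * Real.exp (-(A * ((k:ℝ)+(1-y))^2))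
      - ((k:ℝ)+(1+y))^j * Real.exp (-(A * ((k:ℝ)+(1+y))^2))|
      ≤ (384*A*y*Real.exp (-(A * (9/16)))) * (1/2)^k := by
    intro k
    have hk0 : (0:ℝ) ≤ (k:ℝ) := Nat.cast_nonneg k
    have hkk : k ≤ k^2 := Nat.le_self_pow (by norm_num) k
    have hkk' : (k:ℝ) ≤ (k:ℝ)^2 := by exact_mod_cast hkk
    have h := qq_termG hA hj1 hj5 (p := (k:ℝ)+(1-y)) (q := (k:ℝ)+(1+y)) (c0 := 9/16) k
      (by linarith) (by linarith) (by linarith) (by linarith) (by norm_num)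
      (by nlinarith)
    have e : ((k:ℝ)+(1+y)) - ((k:ℝ)+(1-y)) = 2*y := by ring
    rw [e] at h
    calc |((k:ℝ)+(1-y))^j * Real.exp (-(A * ((k:ℝ)+(1-y))^2))
        - ((k:ℝ)+(1+y))^j * Real.exp (-(A * ((k:ℝ)+(1+y))^2))|
        ≤ (192 * A * (2*y) * Real.exp (-(A * (9/16)))) * (1/2)^k := h
      _ = (384*A*y*Real.exp (-(A * (9/16)))) * (1/2)^k := by ring
  have hgeo := qq_geo hterm
  have hnum : 768*A*Real.exp (-(A * (9/16))) ≤ (1/100) * Real.exp (-(A * y^2)) := by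
    have e1 : Real.exp (-(A * (9/16))) = Real.exp (-(A * (1/16))) * Real.exp (-(A/2)) := by
      rw [← Real.exp_add]; ring_nf
    have e2 : Real.exp (-(A * (1/16))) ≤ Real.exp (-(A * y^2)) := by
      apply Real.exp_le_exp.2
      have : y^2 ≤ 1/16 := by nlinarith
      nlinarith
    have e3 : 768*A*Real.exp (-(A/2)) ≤ 1/100 := by
      have := qq_small hA
      nlinarith [Real.exp_pos (-(A/2))]
    calc 768*A*Real.exp (-(A * (9/16)))
        = (768*A*Real.exp (-(A/2))) * Real.exp (-(A * (1/16))) := by rw [e1]; ring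
      _ ≤ (1/100) * Real.exp (-(A * (1/16))) := by
          apply mul_le_mul_of_nonneg_right e3 (Real.exp_pos _).le
      _ ≤ (1/100) * Real.exp (-(A * y^2)) := by
          apply mul_le_mul_of_nonneg_left e2 (by norm_num)
  calc |∑' k : ℕ, (((k:ℝ)+(1-y))^j * Real.exp (-(A * ((k:ℝ)+(1-y))^2))
          - ((k:ℝ)+(1+y))^j * Real.exp (-(A * ((k:ℝ)+(1+y))^2)))|
      ≤ 2 * (384*A*y*Real.exp (-(A * (9/16)))) := hgeo.2
    _ = (768*A*Real.exp (-(A * (9/16)))) * y := by ring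
    _ ≤ ((1/100) * Real.exp (-(A * y^2))) * y := by
        apply mul_le_mul_of_nonneg_right hnum hy0.le
    _ = (1/100) * (y * Real.exp (-(A * y^2))) := by ring
set_option maxHeartbeats 1000000 in
/-- Regime B (1/4 ≤ y ≤ 1/2): moment-quotient bound. -/
lemma qq_coreB {A y : ℝ} (hA : 72 ≤ A) (hy : 1/4 ≤ y) (hy2 : y ≤ 1/2)
    {j : ℕ} (hj1 : 1 ≤ j) (hj5 : j ≤ 5) (hjodd : Odd j) {c : ℝ}
    (hc0 : 0 ≤ c) (hc1 : c ≤ 1/4)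
    (hkey : (15/128)*(1-2*y) ≤ c - y^(j-1))
    (hcby : c ≤ (1-y)^(j-1)) :
    |∑' n : ℤ, ((n:ℝ)-y)^j * Real.exp (-(A * ((n:ℝ)-y)^2))|
      ≤ c * -(∑' n : ℤ, ((n:ℝ)-y)^1 * Real.exp (-(A * ((n:ℝ)-y)^2))) := by
  have hy0 : 0 < y := by linarith
  have hd0 : (0:ℝ) ≤ 1 - 2*y := by linarith
  -- summability of components
  have syj := qq_comp_summable hA hj5 (c := y) (by linarith) (by linarith)
  have s1yj := qq_comp_summable hA hj5 (c := 1-y) (by linarith) (by linarith)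
  have sy1 := qq_comp_summable hA (show 1 ≤ 5 by norm_num) (c := y) (by linarith) (by linarith)
  have s1y1 := qq_comp_summable hA (show 1 ≤ 5 by norm_num) (c := 1-y) (by linarith) (by linarith)
  -- difference sequences
  set dj : ℕ → ℝ := fun k => ((k:ℝ)+y)^j * Real.exp (-(A * ((k:ℝ)+y)^2))
      - ((k:ℝ)+(1-y))^j * Real.exp (-(A * ((k:ℝ)+(1-y))^2)) with hdj
  set d1 : ℕ → ℝ := fun k => ((k:ℝ)+y)^1 * Real.exp (-(A * ((k:ℝ)+y)^2))
      - ((k:ℝ)+(1-y))^1 * Real.exp (-(A * ((k:ℝ)+(1-y))^2)) with hd1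
  have hsumdj : Summable dj := syj.sub s1yj
  have hsumd1 : Summable d1 := sy1.sub s1y1
  have hrepj : ∑' k, dj k = -(∑' n : ℤ, ((n:ℝ)-y)^j * Real.exp (-(A * ((n:ℝ)-y)^2))) := by
    rw [qq_split hA hj1 hj5 hjodd hy0 hy2, hdj, Summable.tsum_sub syj s1yj, qqP, qqP]
    ring
  have hrep1 : ∑' k, d1 k = -(∑' n : ℤ, ((n:ℝ)-y)^1 * Real.exp (-(A * ((n:ℝ)-y)^2))) := by
    rw [qq_split hA (show 1 ≤ 1 by norm_num) (show 1 ≤ 5 by norm_num) odd_one hy0 hy2,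
      hd1, Summable.tsum_sub sy1 s1y1, qqP, qqP]
    ring
  -- termwise nonnegativity
  have hdjpos : ∀ k, 0 ≤ dj k := by
    intro k
    have hk0 : (0:ℝ) ≤ (k:ℝ) := Nat.cast_nonneg k
    have := qq_gdec hA hj1 hj5 (u := (k:ℝ)+y) (v := (k:ℝ)+(1-y)) (by linarith) (by linarith)
    simp only [hdj]
    linarith
  have hd1pos : ∀ k, 0 ≤ d1 k := by
    intro k
    have hk0 : (0:ℝ) ≤ (k:ℝ) := Nat.cast_nonneg k
    have := qq_gdec hA (show 1 ≤ 1 by norm_num) (show 1 ≤ 5 by norm_num)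
      (u := (k:ℝ)+y) (v := (k:ℝ)+(1-y)) (by linarith) (by linarith)
    simp only [hd1]
    linarith
  have hDj0 : 0 ≤ ∑' k, dj k := tsum_nonneg hdjpos
  -- the φ-combination
  set w : ℕ → ℝ := fun k => c * d1 k - dj k with hw
  have hsumw : Summable w := (hsumd1.mul_left c).sub hsumdj
  have hwtsum : ∑' k, w k = c * (∑' k, d1 k) - ∑' k, dj k := by
    rw [hw, Summable.tsum_sub (hsumd1.mul_left c) hsumdj, tsum_mul_left]
  -- tail bound for w (k+1)
  have htail : ∀ k : ℕ, |w (k+1)| ≤ (240*A*(1-2*y)*Real.exp (-(A * (25/16)))) * (1/2)^k := by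
    intro k
    have hk0 : (0:ℝ) ≤ (k:ℝ) := Nat.cast_nonneg k
    have castp : ((k+1:ℕ):ℝ) + y = (k:ℝ)+1+y := by push_cast; ring
    have castq : ((k+1:ℕ):ℝ) + (1-y) = (k:ℝ)+2-y := by push_cast; ring
    have hb : ∀ (i : ℕ), 1 ≤ i → i ≤ 5 →
        |((k:ℝ)+1+y)^i * Real.exp (-(A * ((k:ℝ)+1+y)^2))
          - ((k:ℝ)+2-y)^i * Real.exp (-(A * ((k:ℝ)+2-y)^2))|
          ≤ (192*A*(1-2*y)*Real.exp (-(A * (25/16)))) * (1/2)^k := by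
      intro i hi1 hi5
      have h := qq_termG hA hi1 hi5 (p := (k:ℝ)+1+y) (q := (k:ℝ)+2-y) (c0 := 25/16) k
        (by linarith) (by linarith) (by linarith) (by linarith) (by norm_num)
        (by nlinarith)
      have e : ((k:ℝ)+2-y) - ((k:ℝ)+1+y) = 1-2*y := by ring
      rw [e] at h
      exact h
    have hbj := hb j hj1 hj5
    have hb1 := hb 1 (by norm_num) (by norm_num)
    simp only [hw, hdj, hd1, castp, castq]
    have habs : |c * (((k:ℝ)+1+y)^1 * Real.exp (-(A * ((k:ℝ)+1+y)^2))
          - ((k:ℝ)+2-y)^1 * Real.exp (-(A * ((k:ℝ)+2-y)^2)))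
        - (((k:ℝ)+1+y)^j * Real.exp (-(A * ((k:ℝ)+1+y)^2))
          - ((k:ℝ)+2-y)^j * Real.exp (-(A * ((k:ℝ)+2-y)^2)))|
        ≤ c * |((k:ℝ)+1+y)^1 * Real.exp (-(A * ((k:ℝ)+1+y)^2))
          - ((k:ℝ)+2-y)^1 * Real.exp (-(A * ((k:ℝ)+2-y)^2))|
        + |((k:ℝ)+1+y)^j * Real.exp (-(A * ((k:ℝ)+1+y)^2))
          - ((k:ℝ)+2-y)^j * Real.exp (-(A * ((k:ℝ)+2-y)^2))| := by
      calc |_ - _| ≤ |c * (((k:ℝ)+1+y)^1 * Real.exp (-(A * ((k:ℝ)+1+y)^2))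
          - ((k:ℝ)+2-y)^1 * Real.exp (-(A * ((k:ℝ)+2-y)^2)))| + |_| := abs_sub _ _
        _ = _ := by rw [abs_mul, abs_of_nonneg hc0]
    calc |c * (((k:ℝ)+1+y)^1 * Real.exp (-(A * ((k:ℝ)+1+y)^2))
          - ((k:ℝ)+2-y)^1 * Real.exp (-(A * ((k:ℝ)+2-y)^2)))
        - (((k:ℝ)+1+y)^j * Real.exp (-(A * ((k:ℝ)+1+y)^2))
          - ((k:ℝ)+2-y)^j * Real.exp (-(A * ((k:ℝ)+2-y)^2)))|
        ≤ c * ((192*A*(1-2*y)*Real.exp (-(A * (25/16)))) * (1/2)^k)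
          + (192*A*(1-2*y)*Real.exp (-(A * (25/16)))) * (1/2)^k := by
          refine le_trans habs ?_
          have := mul_le_mul_of_nonneg_left hb1 hc0
          linarith
      _ ≤ (240*A*(1-2*y)*Real.exp (-(A * (25/16)))) * (1/2)^k := by
          have hfac : (0:ℝ) ≤ (192*A*(1-2*y)*Real.exp (-(A * (25/16)))) * (1/2)^k := by positivity
          nlinarith
  have hgeo := qq_geo htail
  -- decompose the w-sum
  have hw0sum : ∑' k, w k = w 0 + ∑' k, w (k+1) := Summable.tsum_eq_zero_add hsumw
  -- lower bound on w 0
  obtain ⟨i, rfl⟩ : ∃ i, j = i + 1 := ⟨j - 1, by omega⟩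
  have hipow : ∀ t : ℝ, t^(i+1) = t * t^i := fun t => by rw [pow_succ]; ring
  have hw0 : (15/512)*(1-2*y)*Real.exp (-(A * (1/4))) ≤ w 0 := by
    simp only [hw, hd1, hdj]
    push_cast
    have hEy : Real.exp (-(A * (1/4))) ≤ Real.exp (-(A * ((0:ℝ)+y)^2)) := by
      apply Real.exp_le_exp.2
      have : ((0:ℝ)+y)^2 ≤ 1/4 := by nlinarith
      nlinarith
    have hsimp : (i+1) - 1 = i := by omega
    rw [hsimp] at hkey hcby
    have t1 : y * ((15/128)*(1-2*y)) * Real.exp (-(A * ((0:ℝ)+y)^2))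
        ≤ y * (c - y^i) * Real.exp (-(A * ((0:ℝ)+y)^2)) := by
      apply mul_le_mul_of_nonneg_right _ (Real.exp_pos _).le
      apply mul_le_mul_of_nonneg_left hkey hy0.le
    have t2 : (1/4) * ((15/128)*(1-2*y)) * Real.exp (-(A * (1/4)))
        ≤ y * ((15/128)*(1-2*y)) * Real.exp (-(A * ((0:ℝ)+y)^2)) := by
      apply mul_le_mul _ hEy (Real.exp_pos _).le _
      · apply mul_le_mul_of_nonneg_right hy (by nlinarith)
      · nlinarith
    have t3 : 0 ≤ (1-y) * ((1-y)^i - c) * Real.exp (-(A * ((0:ℝ)+(1-y))^2)) := by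
      apply mul_nonneg (mul_nonneg (by linarith) (by linarith)) (Real.exp_pos _).le
    have hexpand : c * (((0:ℝ)+y)^1 * Real.exp (-(A * ((0:ℝ)+y)^2))
          - ((0:ℝ)+(1-y))^1 * Real.exp (-(A * ((0:ℝ)+(1-y))^2)))
        - (((0:ℝ)+y)^(i+1) * Real.exp (-(A * ((0:ℝ)+y)^2))
          - ((0:ℝ)+(1-y))^(i+1) * Real.exp (-(A * ((0:ℝ)+(1-y))^2)))
        = y * (c - y^i) * Real.exp (-(A * ((0:ℝ)+y)^2))
          + (1-y) * ((1-y)^i - c) * Real.exp (-(A * ((0:ℝ)+(1-y))^2)) := by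
      rw [hipow, hipow]
      ring_nf
    rw [hexpand]
    calc (15/512)*(1-2*y)*Real.exp (-(A * (1/4)))
        = (1/4) * ((15/128)*(1-2*y)) * Real.exp (-(A * (1/4))) := by ring
      _ ≤ y * ((15/128)*(1-2*y)) * Real.exp (-(A * ((0:ℝ)+y)^2)) := t2
      _ ≤ y * (c - y^i) * Real.exp (-(A * ((0:ℝ)+y)^2)) := t1
      _ ≤ y * (c - y^i) * Real.exp (-(A * ((0:ℝ)+y)^2))
          + (1-y) * ((1-y)^i - c) * Real.exp (-(A * ((0:ℝ)+(1-y))^2)) := by linarith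
  clear_value dj d1 w
  -- numeric comparison of margin and tail
  have hcmp : 2 * (240*A*(1-2*y)*Real.exp (-(A * (25/16))))
      ≤ (15/512)*(1-2*y)*Real.exp (-(A * (1/4))) := by
    have e1 : Real.exp (-(A * (25/16))) = Real.exp (-(A * (1/4))) * Real.exp (-(A/2))
        * Real.exp (-(A * (13/16))) := by
      rw [← Real.exp_add, ← Real.exp_add]; ring_nf
    have e2 : Real.exp (-(A * (13/16))) ≤ 1 := by
      apply Real.exp_le_one_iff.2; nlinarith
    have e3 : 480*A*Real.exp (-(A/2)) ≤ 15/512 := by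
      have := qq_small hA
      nlinarith [Real.exp_pos (-(A/2))]
    have e4 : 480*A*Real.exp (-(A * (25/16))) ≤ (15/512) * Real.exp (-(A * (1/4))) := by
      rw [e1]
      calc 480*A*(Real.exp (-(A * (1/4))) * Real.exp (-(A/2)) * Real.exp (-(A * (13/16))))
          = (480*A*Real.exp (-(A/2))) * (Real.exp (-(A * (1/4))) * Real.exp (-(A * (13/16)))) := by
            ring
        _ ≤ (15/512) * (Real.exp (-(A * (1/4))) * 1) := by
            apply mul_le_mul e3 _ (by positivity) (by norm_num)
            apply mul_le_mul_of_nonneg_left e2 (Real.exp_pos _).le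
        _ = (15/512) * Real.exp (-(A * (1/4))) := by ring
    nlinarith [mul_le_mul_of_nonneg_right e4 hd0, Real.exp_pos (-(A * (25/16))), Real.exp_pos (-(A * (1/4)))]
  -- conclude: 0 ≤ ∑ w
  have hwnonneg : 0 ≤ ∑' k, w k := by
    rw [hw0sum]
    have h1 : -(2 * (240*A*(1-2*y)*Real.exp (-(A * (25/16))))) ≤ ∑' k, w (k+1) := by
      have habs := abs_le.1 hgeo.2
      linarith [habs.1]
    have h2 : 0 ≤ w 0 - 2 * (240*A*(1-2*y)*Real.exp (-(A * (25/16)))) := by linarith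
    linarith
  -- finish
  have hfin : ∑' k, dj k ≤ c * ∑' k, d1 k := by
    rw [hwtsum] at hwnonneg; linarith
  have hZj : (∑' n : ℤ, ((n:ℝ)-y)^(i+1) * Real.exp (-(A * ((n:ℝ)-y)^2)))
      = -(∑' k, dj k) := by rw [hrepj, neg_neg]
  have hZ1 : (∑' n : ℤ, ((n:ℝ)-y)^1 * Real.exp (-(A * ((n:ℝ)-y)^2)))
      = -(∑' k, d1 k) := by rw [hrep1, neg_neg]
  rw [hZj, hZ1, abs_neg, neg_neg, abs_of_nonneg hDj0]
  exact hfin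
set_option maxHeartbeats 1000000 in
/-- Core moment-quotient bounds for y ∈ (0,1/2]. -/
lemma qq_core {A y : ℝ} (hA : 72 ≤ A) (hy0 : 0 < y) (hy2 : y ≤ 1/2) :
    |∑' n : ℤ, ((n:ℝ)-y)^5 * Real.exp (-(A * ((n:ℝ)-y)^2))|
        ≤ 1/16 * |∑' n : ℤ, ((n:ℝ)-y)^1 * Real.exp (-(A * ((n:ℝ)-y)^2))| ∧
      |∑' n : ℤ, ((n:ℝ)-y)^3 * Real.exp (-(A * ((n:ℝ)-y)^2))|
        ≤ 1/4 * |∑' n : ℤ, ((n:ℝ)-y)^1 * Real.exp (-(A * ((n:ℝ)-y)^2))| := by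
  by_cases hy4 : y ≤ 1/4
  · -- Regime A
    have h5 := qq_coreA hA hy0 hy4 (j := 5) (by norm_num) (by norm_num) ⟨2, rfl⟩
    have h3 := qq_coreA hA hy0 hy4 (j := 3) (by norm_num) (by norm_num) ⟨1, rfl⟩
    have h1 := qq_coreA hA hy0 hy4 (j := 1) (by norm_num) (by norm_num) ⟨0, rfl⟩
    set S5 := ∑' n : ℤ, ((n:ℝ)-y)^5 * Real.exp (-(A * ((n:ℝ)-y)^2)) with hS5
    set S3 := ∑' n : ℤ, ((n:ℝ)-y)^3 * Real.exp (-(A * ((n:ℝ)-y)^2)) with hS3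
    set S1 := ∑' n : ℤ, ((n:ℝ)-y)^1 * Real.exp (-(A * ((n:ℝ)-y)^2)) with hS1
    set g : ℝ := y * Real.exp (-(A * y^2)) with hg
    have hg0 : 0 < g := by rw [hg]; positivity
    have e1 : y^1 * Real.exp (-(A * y^2)) = g := by rw [hg]; ring
    have e5 : y^5 * Real.exp (-(A * y^2)) = y^4 * g := by rw [hg]; ring
    have e3 : y^3 * Real.exp (-(A * y^2)) = y^2 * g := by rw [hg]; ring
    rw [e1] at h1
    rw [e5] at h5
    rw [e3] at h3
    have hy40 : 0 ≤ y^4 * g := mul_nonneg (pow_nonneg hy0.le 4) hg0.le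
    have hy20 : 0 ≤ y^2 * g := mul_nonneg (pow_nonneg hy0.le 2) hg0.le
    have hy4' : y^4 ≤ 1/256 := by
      calc y^4 ≤ (1/4:ℝ)^4 := pow_le_pow_left₀ hy0.le hy4 4
        _ = 1/256 := by norm_num
    have hy2' : y^2 ≤ 1/16 := by
      calc y^2 ≤ (1/4:ℝ)^2 := pow_le_pow_left₀ hy0.le hy4 2
        _ = 1/16 := by norm_num
    clear_value S5 S3 S1 g
    have hb1 : 99/100 * g ≤ -S1 := by
      have := abs_le.1 h1
      linarith [this.2]
    have habs1 : 99/100 * g ≤ |S1| := le_trans hb1 (neg_le_abs S1)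
    have hb5 : |S5| ≤ (1/100 + 1/256) * g := by
      have t := abs_le.1 h5
      have hyg : y^4 * g ≤ (1/256) * g := by nlinarith
      rw [abs_le]
      constructor <;> linarith [t.1, t.2, hyg, hy40]
    have hb3 : |S3| ≤ (1/100 + 1/16) * g := by
      have t := abs_le.1 h3
      have hyg : y^2 * g ≤ (1/16) * g := by nlinarith
      rw [abs_le]
      constructor <;> linarith [t.1, t.2, hyg, hy20]
    constructor
    · calc |S5| ≤ (1/100 + 1/256) * g := hb5
        _ ≤ 1/16 * (99/100 * g) := by nlinarith
        _ ≤ 1/16 * |S1| := by linarith [habs1]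
    · calc |S3| ≤ (1/100 + 1/16) * g := hb3
        _ ≤ 1/4 * (99/100 * g) := by nlinarith
        _ ≤ 1/4 * |S1| := by linarith [habs1]
  · -- Regime B
    push_neg at hy4
    have hy : 1/4 ≤ y := hy4.le
    have hkey5 : (15/128)*(1-2*y) ≤ 1/16 - y^(5-1) := by
      have hq : (0:ℝ) ≤ y^2 + 3/4*y + 7/16 := by nlinarith [sq_nonneg y]
      have hprod : 0 ≤ ((y - 1/4) * (1/2 - y)) * (y^2 + 3/4*y + 7/16) :=
        mul_nonneg (mul_nonneg (by linarith) (by linarith)) hq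
      norm_num
      nlinarith [hprod]
    have hcby5 : (1/16:ℝ) ≤ (1-y)^(5-1) := by
      norm_num
      nlinarith [sq_nonneg (1-y), sq_nonneg ((1-y)^2 - 1/4)]
    have hkey3 : (15/128)*(1-2*y) ≤ 1/4 - y^(3-1) := by
      have hprod : 0 ≤ (1/2 - y) * (y + 17/64) := mul_nonneg (by linarith) (by linarith)
      norm_num
      nlinarith [hprod]
    have hcby3 : (1/4:ℝ) ≤ (1-y)^(3-1) := by
      norm_num
      nlinarith
    have h5 := qq_coreB hA hy hy2 (j := 5) (by norm_num) (by norm_num) ⟨2, rfl⟩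
      (c := 1/16) (by norm_num) (by norm_num) hkey5 hcby5
    have h3 := qq_coreB hA hy hy2 (j := 3) (by norm_num) (by norm_num) ⟨1, rfl⟩
      (c := 1/4) (by norm_num) (by norm_num) hkey3 hcby3
    constructor
    · refine le_trans h5 ?_
      have := neg_le_abs (∑' n : ℤ, ((n:ℝ)-y)^1 * Real.exp (-(A * ((n:ℝ)-y)^2)))
      nlinarith
    · refine le_trans h3 ?_
      have := neg_le_abs (∑' n : ℤ, ((n:ℝ)-y)^1 * Real.exp (-(A * ((n:ℝ)-y)^2)))
      nlinarith
lemma qq_shiftZ (A Y : ℝ) (j : ℕ) (m : ℤ) :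
    ∑' n : ℤ, ((n:ℝ)-Y)^j * Real.exp (-(A * ((n:ℝ)-Y)^2))
      = ∑' n : ℤ, ((n:ℝ)-(Y - m))^j * Real.exp (-(A * ((n:ℝ)-(Y - m))^2)) := by
  set f : ℤ → ℝ := fun n => ((n:ℝ)-Y)^j * Real.exp (-(A * ((n:ℝ)-Y)^2)) with hf
  calc ∑' n, f n = ∑' n, f (n + m) := ((Equiv.addRight m).tsum_eq f).symm
    _ = ∑' n : ℤ, ((n:ℝ)-(Y - m))^j * Real.exp (-(A * ((n:ℝ)-(Y - m))^2)) := by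
        apply tsum_congr
        intro n
        simp only [hf]
        push_cast
        rw [show (n:ℝ) + (m:ℝ) - Y = (n:ℝ) - (Y - (m:ℝ)) by ring]

lemma qq_reflectZ (A z : ℝ) {j : ℕ} (hjodd : Odd j) :
    ∑' n : ℤ, ((n:ℝ)-z)^j * Real.exp (-(A * ((n:ℝ)-z)^2))
      = -(∑' n : ℤ, ((n:ℝ)-(1-z))^j * Real.exp (-(A * ((n:ℝ)-(1-z))^2))) := by
  set f : ℤ → ℝ := fun n => ((n:ℝ)-z)^j * Real.exp (-(A * ((n:ℝ)-z)^2)) with hf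
  calc ∑' n, f n = ∑' n, f (1 - n) := ((Equiv.subLeft (1:ℤ)).tsum_eq f).symm
    _ = ∑' n : ℤ, -(((n:ℝ)-(1-z))^j * Real.exp (-(A * ((n:ℝ)-(1-z))^2))) := by
        apply tsum_congr
        intro n
        simp only [hf]
        push_cast
        rw [show (1:ℝ) - (n:ℝ) - z = -((n:ℝ) - (1 - z)) by ring]
        rw [Odd.neg_pow hjodd, neg_sq]
        ring
    _ = -(∑' n : ℤ, ((n:ℝ)-(1-z))^j * Real.exp (-(A * ((n:ℝ)-(1-z))^2))) := tsum_neg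

/-- Full strength core: valid for any Y whose fractional part is arbitrary. -/
lemma qq_main {A Y : ℝ} (hA : 72 ≤ A)
    (hden : (∑' n : ℤ, ((n:ℝ)-Y)^1 * Real.exp (-(A * ((n:ℝ)-Y)^2))) ≠ 0) :
    |∑' n : ℤ, ((n:ℝ)-Y)^5 * Real.exp (-(A * ((n:ℝ)-Y)^2))|
        ≤ 1/16 * |∑' n : ℤ, ((n:ℝ)-Y)^1 * Real.exp (-(A * ((n:ℝ)-Y)^2))| ∧
      |∑' n : ℤ, ((n:ℝ)-Y)^3 * Real.exp (-(A * ((n:ℝ)-Y)^2))|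
        ≤ 1/4 * |∑' n : ℤ, ((n:ℝ)-Y)^1 * Real.exp (-(A * ((n:ℝ)-Y)^2))| := by
  set y0 : ℝ := Y - ⌊Y⌋ with hy0def
  have hy00 : 0 ≤ y0 := by
    rw [hy0def]; linarith [Int.floor_le Y]
  have hy01 : y0 < 1 := by
    rw [hy0def]; linarith [Int.lt_floor_add_one Y]
  have hsh : ∀ j : ℕ, ∑' n : ℤ, ((n:ℝ)-Y)^j * Real.exp (-(A * ((n:ℝ)-Y)^2))
      = ∑' n : ℤ, ((n:ℝ)-y0)^j * Real.exp (-(A * ((n:ℝ)-y0)^2)) := fun j => qq_shiftZ A Y j ⌊Y⌋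
  rw [hsh 1] at hden ⊢
  rw [hsh 5, hsh 3]
  -- case y0 = 0 : contradiction
  rcases eq_or_lt_of_le hy00 with h0 | hy0pos
  · exfalso
    apply hden
    have h00 : y0 = 0 := h0.symm
    rw [h00]
    have hrefl := qq_reflectZ A (0:ℝ) (j := 1) odd_one
    have hone := qq_shiftZ A (1:ℝ) 1 (1:ℤ)
    simp only [sub_zero, pow_one] at hrefl hone ⊢
    norm_num at hrefl hone
    linarith [hrefl, hone]
  · by_cases hy2 : y0 ≤ 1/2
    · exact qq_core hA hy0pos hy2
    · push_neg at hy2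
      set z : ℝ := 1 - y0 with hzdef
      have hz0 : 0 < z := by rw [hzdef]; linarith
      have hz2 : z ≤ 1/2 := by rw [hzdef]; linarith
      have hc := qq_core hA hz0 hz2
      have hr5 := qq_reflectZ A y0 (j := 5) ⟨2, rfl⟩
      have hr3 := qq_reflectZ A y0 (j := 3) ⟨1, rfl⟩
      have hr1 := qq_reflectZ A y0 (j := 1) odd_one
      rw [← hzdef] at hr5 hr3 hr1
      rw [hr5, hr3, hr1, abs_neg, abs_neg, abs_neg]
      exact hc
theorem Qquot_bound_large_a (a Y : ℝ) (ha : 20 / (4 - Real.pi) ≤ a)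
    (hden : (∑' n : ℤ, ((n : ℝ) - Y) * Real.exp (-a * Real.pi * ((n : ℝ) - Y)^2)) ≠ 0) :
    |Real.pi * (∑' n : ℤ, ((n : ℝ) - Y)^5 * Real.exp (-a * Real.pi * ((n : ℝ) - Y)^2)) /
        (∑' n : ℤ, ((n : ℝ) - Y) * Real.exp (-a * Real.pi * ((n : ℝ) - Y)^2)) -
      (5 / a) * (∑' n : ℤ, ((n : ℝ) - Y)^3 * Real.exp (-a * Real.pi * ((n : ℝ) - Y)^2)) /
        (∑' n : ℤ, ((n : ℝ) - Y) * Real.exp (-a * Real.pi * ((n : ℝ) - Y)^2))| ≤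
      Real.pi / 16 + 5 / (4 * a) ∧ Real.pi / 16 + 5 / (4 * a) ≤ 1/4 := by
  have hpi1 : 3.141592 < Real.pi := Real.pi_gt_d6
  have hpi2 : Real.pi < 3.15 := Real.pi_lt_d2
  have hpi4 : 0 < 4 - Real.pi := by linarith
  have ha23 : 23 ≤ a := by
    have h20 : (23:ℝ) ≤ 20 / (4 - Real.pi) := by
      rw [le_div_iff₀ hpi4]
      nlinarith
    linarith
  have ha0 : 0 < a := by linarith
  set A : ℝ := a * Real.pi with hAdef
  have hA : 72 ≤ A := by rw [hAdef]; nlinarith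
  -- convert the sums to canonical form
  have hE1 : (∑' n : ℤ, ((n : ℝ) - Y) * Real.exp (-a * Real.pi * ((n : ℝ) - Y)^2))
      = ∑' n : ℤ, ((n:ℝ)-Y)^1 * Real.exp (-(A * ((n:ℝ)-Y)^2)) := by
    apply tsum_congr
    intro n
    rw [pow_one, show -a * Real.pi * ((n:ℝ) - Y)^2 = -(A * ((n:ℝ)-Y)^2) by rw [hAdef]; ring]
  have hE5 : (∑' n : ℤ, ((n : ℝ) - Y)^5 * Real.exp (-a * Real.pi * ((n : ℝ) - Y)^2))
      = ∑' n : ℤ, ((n:ℝ)-Y)^5 * Real.exp (-(A * ((n:ℝ)-Y)^2)) := by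
    apply tsum_congr
    intro n
    rw [show -a * Real.pi * ((n:ℝ) - Y)^2 = -(A * ((n:ℝ)-Y)^2) by rw [hAdef]; ring]
  have hE3 : (∑' n : ℤ, ((n : ℝ) - Y)^3 * Real.exp (-a * Real.pi * ((n : ℝ) - Y)^2))
      = ∑' n : ℤ, ((n:ℝ)-Y)^3 * Real.exp (-(A * ((n:ℝ)-Y)^2)) := by
    apply tsum_congr
    intro n
    rw [show -a * Real.pi * ((n:ℝ) - Y)^2 = -(A * ((n:ℝ)-Y)^2) by rw [hAdef]; ring]
  rw [hE1] at hden
  rw [hE1, hE5, hE3]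
  obtain ⟨h5, h3⟩ := qq_main hA hden
  set S1 := ∑' n : ℤ, ((n:ℝ)-Y)^1 * Real.exp (-(A * ((n:ℝ)-Y)^2)) with hS1
  set S5 := ∑' n : ℤ, ((n:ℝ)-Y)^5 * Real.exp (-(A * ((n:ℝ)-Y)^2)) with hS5
  set S3 := ∑' n : ℤ, ((n:ℝ)-Y)^3 * Real.exp (-(A * ((n:ℝ)-Y)^2)) with hS3
  clear_value S1 S5 S3
  have hS1pos : 0 < |S1| := abs_pos.2 hden
  have hpi0 : 0 < Real.pi := by linarith
  have h5a0 : 0 < 5 / a := by positivity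
  constructor
  · have hdiv : Real.pi * S5 / S1 - 5 / a * S3 / S1 = (Real.pi * S5 - 5 / a * S3) / S1 := by
      field_simp
    rw [hdiv, abs_div, div_le_iff₀ hS1pos]
    have htri : |Real.pi * S5 - 5 / a * S3| ≤ Real.pi * |S5| + (5/a) * |S3| := by
      calc |Real.pi * S5 - 5 / a * S3| ≤ |Real.pi * S5| + |5 / a * S3| := abs_sub _ _
        _ = Real.pi * |S5| + (5/a) * |S3| := by
            rw [abs_mul, abs_mul, abs_of_pos hpi0, abs_of_pos h5a0]
    have hb5 : Real.pi * |S5| ≤ Real.pi * (1/16 * |S1|) := by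
      apply mul_le_mul_of_nonneg_left h5 hpi0.le
    have hb3 : (5/a) * |S3| ≤ (5/a) * (1/4 * |S1|) := by
      apply mul_le_mul_of_nonneg_left h3 h5a0.le
    have hfin : Real.pi * (1/16 * |S1|) + (5/a) * (1/4 * |S1|)
        = (Real.pi / 16 + 5 / (4 * a)) * |S1| := by
      field_simp
    linarith
  · have h20 : 20 ≤ a * (4 - Real.pi) := by
      rw [div_le_iff₀ hpi4] at ha
      linarith
    have hinv : 5 / (4 * a) ≤ (4 - Real.pi) / 16 := by
      rw [div_le_div_iff₀ (by linarith) (by norm_num)]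
      nlinarith
    linarith
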